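/- arXiv:hep-th/0305095 — 2 statements merged into one kernel-verified Lean document; each statement's English description precedes it below -/
import Mathlib

section
/- Let T be a triangulated category with a stability condition (Z, P) in the sense of Bridgeland. Then for each real number φ, the full subcategory P(φ) of semistable objects of phase φ is an abelian category; in particular it is closed under kernels and cokernels of morphisms taken inside the heart P((φ−1, φ]). -/
/-!
STATEMENT 4: For a Bridgeland stability condition `(Z, P)` on a triangulated
category `T`, each subcategory `P(φ)` of semistable objects of phase `φ` is an
abelian category.
-/

open CategoryTheory CategoryTheory.Limits CategoryTheory.Pretriangulated
open ZeroObject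

universe v u

/-- A Bridgeland stability condition on a (pre)triangulated category `T`:
an additive central charge `Z` (a linear map on `K(T)`, encoded by additivity
over distinguished triangles) together with full additive subcategories
`P(φ)`, `φ ∈ ℝ`, satisfying Bridgeland's axioms. -/
structure StabilityCondition (T : Type u) [Category.{v} T] [HasZeroObject T]
    [Preadditive T] [HasShift T ℤ] [∀ n : ℤ, (shiftFunctor T n).Additive]
    [Pretriangulated T] where
  /-- The central charge, as a function on objects. -/
  Z : T → ℂ
  /-- The semistable objects of each phase. -/
  P : ℝ → T → Prop
  Z_iso : ∀ {X Y : T}, (X ≅ Y) → Z X = Z Y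
  Z_additive : ∀ (Tr : Triangle T), (Tr ∈ distTriang T) → Z Tr.obj₂ = Z Tr.obj₁ + Z Tr.obj₃
  P_iso : ∀ (φ : ℝ) {X Y : T}, (X ≅ Y) → P φ X → P φ Y
  P_zero : ∀ (φ : ℝ) (X : T), IsZero X → P φ X
  /-- (a) nonzero semistables of phase `φ` have `Z = m e^{iπφ}` with `m > 0`. -/
  phase : ∀ (φ : ℝ) (E : T), P φ E → ¬ IsZero E →
    ∃ m : ℝ, 0 < m ∧ Z E = (m : ℂ) * Complex.exp ((Real.pi * φ : ℝ) * Complex.I)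
  /-- (b) `P(φ+1) = P(φ)[1]`. -/
  shift : ∀ (φ : ℝ) (E : T), P (φ + 1) (E⟦(1 : ℤ)⟧) ↔ P φ E
  /-- (c) no morphisms from higher to strictly lower phase. -/
  hom_vanish : ∀ {φ₁ φ₂ : ℝ} {E₁ E₂ : T}, φ₂ < φ₁ → P φ₁ E₁ → P φ₂ E₂ →
    ∀ f : E₁ ⟶ E₂, f = 0
  /-- (d) Harder–Narasimhan filtrations exist. -/
  hn : ∀ E : T, ¬ IsZero E →
    ∃ (n : ℕ) (Eo : Fin (n + 1) → T) (A : Fin n → T) (φs : Fin n → ℝ),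
      IsZero (Eo 0) ∧ Nonempty (Eo (Fin.last n) ≅ E) ∧ StrictAnti φs ∧
      (∀ i : Fin n, P (φs i) (A i)) ∧
      ∀ i : Fin n, ∃ (f : Eo i.castSucc ⟶ Eo i.succ) (g : Eo i.succ ⟶ A i)
        (h : A i ⟶ (Eo i.castSucc)⟦(1 : ℤ)⟧), Triangle.mk f g h ∈ distTriang T

set_option linter.unusedSectionVars false

section Auxiliary

namespace StabilityCondition

variable {T : Type u} [Category.{v} T] [HasZeroObject T]
    [Preadditive T] [HasShift T ℤ] [∀ n : ℤ, (shiftFunctor T n).Additive]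
    [Pretriangulated T] (σ : StabilityCondition T)

lemma P_up {ψ : ℝ} {X : T} (h : σ.P ψ X) : σ.P (ψ + 1) (X⟦(1:ℤ)⟧) :=
  (σ.shift ψ X).mpr h

lemma P_down {ψ : ℝ} {X : T} (h : σ.P ψ X) : σ.P (ψ - 1) (X⟦(-1:ℤ)⟧) := by
  refine (σ.shift (ψ - 1) (X⟦(-1:ℤ)⟧)).mp ?_
  rw [sub_add_cancel]
  exact σ.P_iso ψ (shiftNegShift X (1:ℤ)).symm h

lemma Z_of_isZero {X : T} (h : IsZero X) : σ.Z X = 0 := by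
  have h0 : σ.Z (0 : T) = 0 := by
    have h1 := σ.Z_additive (contractibleTriangle (0 : T)) (contractible_distinguished _)
    simp only [contractibleTriangle] at h1
    exact (add_eq_left).mp h1.symm
  rw [σ.Z_iso (h.iso (isZero_zero T)), h0]

end StabilityCondition

set_option linter.unusedSectionVars false

namespace StabilityProof
open StabilityCondition

variable {T : Type u} [Category.{v} T] [HasZeroObject T]
    [Preadditive T] [HasShift T ℤ] [∀ n : ℤ, (shiftFunctor T n).Additive]
    [Pretriangulated T]

section Filtration
variable {n : ℕ} {Eo : Fin (n+1) → T} {A : Fin n → T}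
variable {ft : ∀ i : Fin n, Eo i.castSucc ⟶ Eo i.succ}
variable {gt : ∀ i : Fin n, Eo i.succ ⟶ A i}
variable {ht : ∀ i : Fin n, A i ⟶ (Eo i.castSucc)⟦(1:ℤ)⟧}

lemma zero_up (hEo0 : IsZero (Eo 0))
    (htri : ∀ i : Fin n, Triangle.mk (ft i) (gt i) (ht i) ∈ distTriang T) :
    ∀ p : Fin (n+1), (∀ j : Fin n, j.succ ≤ p → IsZero (A j)) → IsZero (Eo p) := by
  intro p
  induction p using Fin.induction with
  | zero => intro _; exact hEo0
  | succ i ih =>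
    intro h
    exact Triangle.isZero₂_of_isZero₁₃ _ (htri i)
      (ih fun j hj => h j (hj.trans (Fin.castSucc_le_succ i)))
      (h i (le_refl _))

lemma iso_last (htri : ∀ i : Fin n, Triangle.mk (ft i) (gt i) (ht i) ∈ distTriang T) :
    ∀ p : Fin (n+1), (∀ j : Fin n, p ≤ j.castSucc → IsZero (A j)) →
      Nonempty (Eo p ≅ Eo (Fin.last n)) := by
  intro p
  induction p using Fin.reverseInduction with
  | last => intro _; exact ⟨Iso.refl _⟩
  | cast i ih =>
    intro h
    have hz : IsZero (A i) := h i (le_refl _)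
    have : IsIso (ft i) := (Triangle.isZero₃_iff_isIso₁ _ (htri i)).mp hz
    obtain ⟨e⟩ := ih (fun j hj => h j ((Fin.castSucc_le_succ i).trans hj))
    exact ⟨asIso (ft i) ≪≫ e⟩

lemma cov_vanish (hEo0 : IsZero (Eo 0))
    (htri : ∀ i : Fin n, Triangle.mk (ft i) (gt i) (ht i) ∈ distTriang T) {W : T} :
    ∀ p : Fin (n+1), (∀ j : Fin n, j.succ ≤ p → ∀ g : W ⟶ A j, g = 0) →
    ∀ g : W ⟶ Eo p, g = 0 := by
  intro p
  induction p using Fin.induction with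
  | zero => intro _ g; exact hEo0.eq_of_tgt g 0
  | succ i ih =>
    intro h g
    obtain ⟨g', hg'⟩ := Triangle.coyoneda_exact₂ _ (htri i) g (h i (le_refl _) _)
    rw [hg', ih (fun j hj x => h j (hj.trans (Fin.castSucc_le_succ i)) x) g']; exact zero_comp

lemma con_vanish (hEo0 : IsZero (Eo 0))
    (htri : ∀ i : Fin n, Triangle.mk (ft i) (gt i) (ht i) ∈ distTriang T) {W : T} :
    ∀ p : Fin (n+1), (∀ j : Fin n, j.succ ≤ p → ∀ g : A j ⟶ W, g = 0) →
    ∀ g : Eo p ⟶ W, g = 0 := by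
  intro p
  induction p using Fin.induction with
  | zero => intro _ g; exact hEo0.eq_of_src g 0
  | succ i ih =>
    intro h g
    have h1 : ft i ≫ g = 0 := ih (fun j hj x => h j (hj.trans (Fin.castSucc_le_succ i)) x) _
    obtain ⟨y, hy⟩ := Triangle.yoneda_exact₂ _ (htri i) g h1
    rw [hy, h i (le_refl _) y]; exact comp_zero

variable (Eo ft) in
noncomputable def chainMap : ∀ p : Fin (n+1), (Eo p ⟶ Eo (Fin.last n)) :=
  Fin.reverseInduction (𝟙 _) (fun i ih => ft i ≫ ih)

lemma chainMap_last : chainMap Eo ft (Fin.last n) = 𝟙 _ :=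
  Fin.reverseInduction_last

lemma chainMap_cast (i : Fin n) :
    chainMap Eo ft i.castSucc = ft i ≫ chainMap Eo ft i.succ :=
  Fin.reverseInduction_castSucc _

lemma chain_cancel
    (htri : ∀ i : Fin n, Triangle.mk (ft i) (gt i) (ht i) ∈ distTriang T) {W : T}
    (hW : ∀ i : Fin n, ∀ z : W ⟶ (A i)⟦(-1:ℤ)⟧, z = 0) :
    ∀ p (x : W ⟶ Eo p), x ≫ chainMap Eo ft p = 0 → x = 0 := by
  intro p
  induction p using Fin.reverseInduction with
  | last => intro x hx; rw [chainMap_last, Category.comp_id] at hx; exact hx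
  | cast i ih =>
    intro x hx
    rw [chainMap_cast, ← Category.assoc] at hx
    have h2 : x ≫ ft i = 0 := ih _ hx
    obtain ⟨z, hz⟩ := Triangle.coyoneda_exact₂ _ (inv_rot_of_distTriang _ (htri i)) x h2
    rw [hz, hW i z]; exact zero_comp

end Filtration

section Bounds
variable (σ : StabilityCondition T)
variable {n : ℕ} {Eo : Fin (n+1) → T} {A : Fin n → T} {φs : Fin n → ℝ}
variable {ft : ∀ i : Fin n, Eo i.castSucc ⟶ Eo i.succ}
variable {gt : ∀ i : Fin n, Eo i.succ ⟶ A i}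
variable {ht : ∀ i : Fin n, A i ⟶ (Eo i.castSucc)⟦(1:ℤ)⟧}

lemma topbound (hEo0 : IsZero (Eo 0))
    (htri : ∀ i : Fin n, Triangle.mk (ft i) (gt i) (ht i) ∈ distTriang T)
    (hanti : StrictAnti φs) (hsemi : ∀ i, σ.P (φs i) (A i))
    {E : T} (hiso : Eo (Fin.last n) ≅ E) (c : ℝ)
    (hcov : ∀ ψ, c < ψ → ∀ D : T, σ.P ψ D → ∀ g : D ⟶ E, g = 0) :
    ∀ i, ¬IsZero (A i) → φs i ≤ c := by
  classical
  by_contra hcontra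
  push_neg at hcontra
  obtain ⟨i', hi'z, hi'c⟩ := hcontra
  set S := Finset.univ.filter (fun i : Fin n => ¬IsZero (A i) ∧ c < φs i) with hS
  have hSne : S.Nonempty := ⟨i', by simp [hS, hi'z, hi'c]⟩
  obtain ⟨i₀, hi₀S, hmin⟩ := Finset.exists_min_image S id hSne
  simp only [hS, Finset.mem_filter, Finset.mem_univ, true_and] at hi₀S
  obtain ⟨hi₀z, hi₀c⟩ := hi₀S
  have hzero_lt : ∀ j : Fin n, j < i₀ → IsZero (A j) := by
    intro j hj
    by_contra hjz
    have : j ∈ S := by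
      simp only [hS, Finset.mem_filter, Finset.mem_univ, true_and]
      exact ⟨hjz, lt_trans hi₀c (hanti hj)⟩
    exact absurd (hmin j this) (not_le.mpr hj)
  have hzcast : IsZero (Eo i₀.castSucc) :=
    zero_up hEo0 htri _ (fun j hj => hzero_lt j (Fin.succ_le_castSucc_iff.mp hj))
  have higt : IsIso (gt i₀) := (Triangle.isZero₁_iff_isIso₂ _ (htri i₀)).mp hzcast
  have hW : ∀ i : Fin n, ∀ z : A i₀ ⟶ (A i)⟦(-1:ℤ)⟧, z = 0 := by
    intro i z
    by_cases hAi : IsZero (A i)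
    · exact ((shiftFunctor T (-1:ℤ)).map_isZero hAi).eq_of_tgt z 0
    · have hle : i₀ ≤ i := by
        by_contra hlt
        exact hAi (hzero_lt i (not_le.mp hlt))
      have : φs i ≤ φs i₀ := hanti.antitone hle
      exact σ.hom_vanish (by linarith) (hsemi i₀) (σ.P_down (hsemi i)) z
  have hx0 : (asIso (gt i₀)).inv ≫ chainMap Eo ft i₀.succ = 0 := by
    have hν : ((asIso (gt i₀)).inv ≫ chainMap Eo ft i₀.succ) ≫ hiso.hom = 0 :=
      hcov (φs i₀) hi₀c (A i₀) (hsemi i₀) _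
    calc (asIso (gt i₀)).inv ≫ chainMap Eo ft i₀.succ
        = (((asIso (gt i₀)).inv ≫ chainMap Eo ft i₀.succ) ≫ hiso.hom) ≫ hiso.inv := by
          simp
      _ = 0 := by rw [hν, zero_comp]
  have hx : (asIso (gt i₀)).inv = 0 := chain_cancel htri hW i₀.succ _ hx0
  have hid : 𝟙 (A i₀) = 0 := by
    rw [← Iso.inv_hom_id (asIso (gt i₀)), hx, zero_comp]
  exact hi₀z ((Limits.IsZero.iff_id_eq_zero _).mpr hid)

lemma botbound (hEo0 : IsZero (Eo 0))
    (htri : ∀ i : Fin n, Triangle.mk (ft i) (gt i) (ht i) ∈ distTriang T)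
    (hanti : StrictAnti φs) (hsemi : ∀ i, σ.P (φs i) (A i))
    {E : T} (hiso : Eo (Fin.last n) ≅ E) (c : ℝ)
    (hcon : ∀ ψ, ψ < c → ∀ D : T, σ.P ψ D → ∀ g : E ⟶ D, g = 0) :
    ∀ i, ¬IsZero (A i) → c ≤ φs i := by
  classical
  by_contra hcontra
  push_neg at hcontra
  obtain ⟨i', hi'z, hi'c⟩ := hcontra
  set S := Finset.univ.filter (fun i : Fin n => ¬IsZero (A i) ∧ φs i < c) with hS
  have hSne : S.Nonempty := ⟨i', by simp [hS, hi'z, hi'c]⟩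
  obtain ⟨i₁, hi₁S, hmax⟩ := Finset.exists_max_image S id hSne
  simp only [hS, Finset.mem_filter, Finset.mem_univ, true_and] at hi₁S
  obtain ⟨hi₁z, hi₁c⟩ := hi₁S
  have hzero_gt : ∀ j : Fin n, i₁ < j → IsZero (A j) := by
    intro j hj
    by_contra hjz
    have : j ∈ S := by
      simp only [hS, Finset.mem_filter, Finset.mem_univ, true_and]
      exact ⟨hjz, lt_trans (hanti hj) hi₁c⟩
    exact absurd (hmax j this) (not_le.mpr hj)
  obtain ⟨e⟩ := iso_last htri i₁.succ (fun j hj => hzero_gt j (Fin.succ_le_castSucc_iff.mp hj))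
  -- gt i₁ is nonzero
  have hg1 : gt i₁ ≠ 0 := by
    intro hg0
    obtain ⟨z', hz'⟩ := Triangle.yoneda_exact₂ _ (rot_of_distTriang _ (htri i₁))
      (𝟙 (A i₁)) (by simp [hg0]; exact zero_comp)
    have hm : (shiftShiftNeg (Eo i₁.castSucc) (1:ℤ)).inv ≫
        (shiftFunctor T (-1:ℤ)).map z' = 0 := by
      apply con_vanish hEo0 htri i₁.castSucc
      intro j hj x
      have hjlt : j < i₁ := Fin.succ_le_castSucc_iff.mp hj
      by_cases hAj : IsZero (A j)
      · exact hAj.eq_of_src x 0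
      · have h1 : φs i₁ < φs j := hanti hjlt
        exact σ.hom_vanish (by linarith) (hsemi j) (σ.P_down (hsemi i₁)) x
    have hz'0 : z' = 0 := by
      apply (shiftFunctor T (-1:ℤ)).map_injective
      rw [Functor.map_zero]
      have hcalc : (shiftFunctor T (-1:ℤ)).map z'
          = (shiftShiftNeg (Eo i₁.castSucc) (1:ℤ)).hom ≫
            ((shiftShiftNeg (Eo i₁.castSucc) (1:ℤ)).inv ≫
              (shiftFunctor T (-1:ℤ)).map z') := (Iso.hom_inv_id_assoc _ _).symm
      rw [hcalc, hm]; exact comp_zero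
    have : 𝟙 (A i₁) = 0 := by
      rw [hz', hz'0]; exact comp_zero
    exact hi₁z ((Limits.IsZero.iff_id_eq_zero _).mpr this)
  -- but the composite E → A i₁ must vanish
  have hν : (hiso.inv ≫ e.inv) ≫ gt i₁ = 0 :=
    hcon (φs i₁) hi₁c (A i₁) (hsemi i₁) _
  apply hg1
  calc gt i₁ = e.hom ≫ hiso.hom ≫ ((hiso.inv ≫ e.inv) ≫ gt i₁) := by simp
    _ = 0 := by rw [hν, comp_zero, comp_zero]

end Bounds

lemma recog (σ : StabilityCondition T) (φ : ℝ) (E : T)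
    (hcov : ∀ ψ, φ < ψ → ∀ D : T, σ.P ψ D → ∀ g : D ⟶ E, g = 0)
    (hcon : ∀ ψ, ψ < φ → ∀ D : T, σ.P ψ D → ∀ g : E ⟶ D, g = 0) : σ.P φ E := by
  by_cases hE : IsZero E
  · exact σ.P_zero φ E hE
  obtain ⟨n, Eo, A, φs, hEo0, ⟨hiso⟩, hanti, hsemi, htr⟩ := σ.hn E hE
  choose ft gt ht htri using htr
  have htop := topbound σ hEo0 htri hanti hsemi hiso φ hcov
  have hbot := botbound σ hEo0 htri hanti hsemi hiso φ hcon
  by_cases hex : ∃ i, ¬IsZero (A i)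
  · obtain ⟨i, hi⟩ := hex
    have hall : ∀ j : Fin n, j ≠ i → IsZero (A j) := by
      intro j hj
      by_contra hz
      have h1 : φs j = φ := le_antisymm (htop j hz) (hbot j hz)
      have h2 : φs i = φ := le_antisymm (htop i hi) (hbot i hi)
      exact hj (hanti.injective (h1.trans h2.symm))
    have hzcast : IsZero (Eo i.castSucc) :=
      zero_up hEo0 htri _
        (fun j hj => hall j (Fin.ne_of_lt (Fin.succ_le_castSucc_iff.mp hj)))
    have higt : IsIso (gt i) := (Triangle.isZero₁_iff_isIso₂ _ (htri i)).mp hzcast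
    obtain ⟨e⟩ := iso_last htri i.succ
      (fun j hj => hall j (Fin.ne_of_gt (Fin.succ_le_castSucc_iff.mp hj)))
    have hPE : σ.P (φs i) E := σ.P_iso _ ((asIso (gt i)).symm ≪≫ e ≪≫ hiso) (hsemi i)
    rwa [le_antisymm (htop i hi) (hbot i hi)] at hPE
  · push_neg at hex
    have hz : IsZero (Eo (Fin.last n)) := zero_up hEo0 htri _ (fun j _ => hex j)
    exact absurd (hz.of_iso hiso.symm) hE

lemma cone_split (σ : StabilityCondition T) (φ : ℝ) {E F C : T}
    (hE : σ.P φ E) (hF : σ.P φ F)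
    {f : E ⟶ F} {u : F ⟶ C} {w : C ⟶ E⟦(1:ℤ)⟧}
    (hT : Triangle.mk f u w ∈ distTriang T) :
    ∃ (X Y : T) (a : X ⟶ C) (b : C ⟶ Y) (c : Y ⟶ X⟦(1:ℤ)⟧),
      (Triangle.mk a b c ∈ distTriang T) ∧ σ.P (φ+1) X ∧ σ.P φ Y := by
  classical
  have hcovC : ∀ ψ, φ + 1 < ψ → ∀ D : T, σ.P ψ D → ∀ g : D ⟶ C, g = 0 := by
    intro ψ hψ D hD g
    have h1 : g ≫ w = 0 := σ.hom_vanish (by linarith) hD (σ.P_up hE) _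
    obtain ⟨y, hy⟩ := Triangle.coyoneda_exact₃ _ hT g h1
    rw [hy, σ.hom_vanish (by linarith) hD hF y]; exact zero_comp
  have hconC : ∀ ψ, ψ < φ → ∀ D : T, σ.P ψ D → ∀ g : C ⟶ D, g = 0 := by
    intro ψ hψ D hD g
    have h1 : u ≫ g = 0 := σ.hom_vanish (by linarith) hF hD _
    obtain ⟨z, hz⟩ := Triangle.yoneda_exact₃ _ hT g h1
    rw [hz, σ.hom_vanish (by linarith) (σ.P_up hE) hD z]; exact comp_zero
  by_cases hC : IsZero C
  · exact ⟨C, 0, 𝟙 C, 0, 0, contractible_distinguished C, σ.P_zero _ _ hC,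
      σ.P_zero _ _ (isZero_zero T)⟩
  obtain ⟨n, Eo, A, φs, hEo0, ⟨hiso⟩, hanti, hsemi, htr⟩ := σ.hn C hC
  choose ft gt ht htri using htr
  have htop := topbound σ hEo0 htri hanti hsemi hiso (φ+1) hcovC
  have hbot := botbound σ hEo0 htri hanti hsemi hiso φ hconC
  -- the phase window argument via the central charge
  have hwin : ∀ i, ¬IsZero (A i) → φs i = φ ∨ φs i = φ + 1 := by
    set ζ : ℂ := Complex.exp (-(↑(Real.pi * φ) : ℂ) * Complex.I) with hζ
    have hZEo : ∀ p : Fin (n+1), σ.Z (Eo p) =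
        ∑ i : Fin n, (if i.castSucc < p then σ.Z (A i) else 0) := by
      intro p
      induction p using Fin.induction with
      | zero =>
        have : ∀ i : Fin n, ¬ (i.castSucc < (0 : Fin (n+1))) := fun i => Fin.not_lt_zero _
        simp [σ.Z_of_isZero hEo0, this]
      | succ i ih =>
        have hadd := σ.Z_additive _ (htri i)
        simp only [Triangle.mk_obj₁, Triangle.mk_obj₂, Triangle.mk_obj₃, Triangle.mk_mor₁, Triangle.mk_mor₂, Triangle.mk_mor₃, Triangle.rotate_obj₁, Triangle.rotate_obj₂, Triangle.rotate_obj₃, Triangle.rotate_mor₁, Triangle.rotate_mor₂, Triangle.rotate_mor₃] at hadd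
        rw [hadd, ih]
        have hsplit : ∀ j : Fin n, (if j.castSucc < i.succ then σ.Z (A j) else 0) =
            (if j.castSucc < i.castSucc then σ.Z (A j) else 0) +
            (if j = i then σ.Z (A j) else 0) := by
          intro j
          rcases lt_trichotomy j i with h | h | h
          · rw [if_pos, if_pos, if_neg (Fin.ne_of_lt h), add_zero]
            · exact Fin.castSucc_lt_castSucc_iff.mpr h
            · exact Fin.castSucc_lt_succ_iff.mpr h.le
          · subst h
            rw [if_pos (Fin.castSucc_lt_succ_iff.mpr le_rfl),
              if_neg (lt_irrefl _), if_pos rfl, zero_add]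
          · rw [if_neg, if_neg, if_neg (Fin.ne_of_gt h), add_zero]
            · exact fun hh => absurd (Fin.castSucc_lt_castSucc_iff.mp hh) (asymm h)
            · exact fun hh => absurd (Fin.castSucc_lt_succ_iff.mp hh) (not_le.mpr h)
        rw [Finset.sum_congr rfl (fun j _ => hsplit j), Finset.sum_add_distrib,
          Finset.sum_ite_eq' Finset.univ i (fun j => σ.Z (A j)),
          if_pos (Finset.mem_univ i)]
    have hZC : σ.Z C = ∑ i : Fin n, σ.Z (A i) := by
      rw [← σ.Z_iso hiso, hZEo (Fin.last n)]
      exact Finset.sum_congr rfl (fun j _ => if_pos (Fin.castSucc_lt_last j))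
    have hZfe : σ.Z C = σ.Z F - σ.Z E := by
      have h := σ.Z_additive _ hT
      simp only [Triangle.mk_obj₁, Triangle.mk_obj₂, Triangle.mk_obj₃, Triangle.mk_mor₁, Triangle.mk_mor₂, Triangle.mk_mor₃, Triangle.rotate_obj₁, Triangle.rotate_obj₂, Triangle.rotate_obj₃, Triangle.rotate_mor₁, Triangle.rotate_mor₂, Triangle.rotate_mor₃] at h
      rw [h]; ring
    have him0 : ∀ G : T, σ.P φ G → (σ.Z G * ζ).im = 0 := by
      intro G hG
      by_cases hz : IsZero G
      · rw [σ.Z_of_isZero hz, zero_mul]; rfl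
      · obtain ⟨m, hm, hZm⟩ := σ.phase φ G hG hz
        rw [hZm, mul_assoc, ← Complex.exp_add]
        rw [show ((Real.pi * φ : ℝ) : ℂ) * Complex.I + -(↑(Real.pi * φ) : ℂ) * Complex.I
          = 0 by ring, Complex.exp_zero, mul_one, Complex.ofReal_im]
    have hterm : ∀ i : Fin n, ¬IsZero (A i) → ∃ m : ℝ, 0 < m ∧
        (σ.Z (A i) * ζ).im = m * Real.sin (Real.pi * φs i - Real.pi * φ) := by
      intro i hi
      obtain ⟨m, hm, hZm⟩ := σ.phase (φs i) (A i) (hsemi i) hi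
      refine ⟨m, hm, ?_⟩
      rw [hZm, mul_assoc, ← Complex.exp_add]
      rw [show ((Real.pi * φs i : ℝ) : ℂ) * Complex.I + -(↑(Real.pi * φ) : ℂ) * Complex.I
        = ((Real.pi * φs i - Real.pi * φ : ℝ) : ℂ) * Complex.I by push_cast; ring]
      rw [Complex.mul_im, Complex.ofReal_re, Complex.ofReal_im, zero_mul, add_zero,
        Complex.exp_ofReal_mul_I_im]
    have hge : ∀ i ∈ Finset.univ, 0 ≤ (σ.Z (A i) * ζ).im := by
      intro i _
      by_cases hi : IsZero (A i)
      · rw [σ.Z_of_isZero hi, zero_mul]; exact le_refl 0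
      · obtain ⟨m, hm, heq⟩ := hterm i hi
        rw [heq]
        apply mul_nonneg hm.le
        apply Real.sin_nonneg_of_nonneg_of_le_pi
        · have := hbot i hi
          nlinarith [Real.pi_pos]
        · have := htop i hi
          nlinarith [Real.pi_pos]
    have hsum0 : ∑ i : Fin n, (σ.Z (A i) * ζ).im = 0 := by
      rw [← Complex.im_sum, ← Finset.sum_mul, ← hZC, hZfe, sub_mul]
      have h1 := him0 F hF
      have h2 := him0 E hE
      rw [Complex.sub_im, h1, h2, sub_zero]
    have hzero := (Finset.sum_eq_zero_iff_of_nonneg hge).mp hsum0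
    intro i hi
    obtain ⟨m, hm, heq⟩ := hterm i hi
    have h0 : m * Real.sin (Real.pi * φs i - Real.pi * φ) = 0 := by
      rw [← heq]; exact hzero i (Finset.mem_univ i)
    have hsin : Real.sin (Real.pi * φs i - Real.pi * φ) = 0 := by
      rcases mul_eq_zero.mp h0 with h | h
      · exact absurd h hm.ne'
      · exact h
    have hb := hbot i hi
    have ht' := htop i hi
    by_cases h1 : φs i = φ + 1
    · exact Or.inr h1
    · left
      have hlt : Real.pi * φs i - Real.pi * φ < Real.pi := by
        have : φs i < φ + 1 := lt_of_le_of_ne ht' h1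
        nlinarith [Real.pi_pos]
      have hgt : -Real.pi < Real.pi * φs i - Real.pi * φ := by
        nlinarith [Real.pi_pos]
      have := (Real.sin_eq_zero_iff_of_lt_of_lt hgt hlt).mp hsin
      have hπ := Real.pi_pos
      nlinarith
  -- case analysis on the existence of a factor of phase φ
  by_cases hex : ∃ i, ¬IsZero (A i) ∧ φs i = φ
  · obtain ⟨i₁, hi₁z, hi₁φ⟩ := hex
    have hzero_gt : ∀ j, i₁ < j → IsZero (A j) := by
      intro j hj
      by_contra hjz
      have h2 := hanti hj
      rcases hwin j hjz with h | h <;> rw [h, hi₁φ] at h2 <;> linarith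
    obtain ⟨e0⟩ := iso_last htri i₁.succ
      (fun j hj => hzero_gt j (Fin.succ_le_castSucc_iff.mp hj))
    have e2 : Eo i₁.succ ≅ C := e0 ≪≫ hiso
    have hX : σ.P (φ+1) (Eo i₁.castSucc) := by
      apply recog σ (φ+1) _
      · intro ψ hψ D hD g
        apply cov_vanish hEo0 htri i₁.castSucc _ g
        intro j _ x
        by_cases hAj : IsZero (A j)
        · exact hAj.eq_of_tgt x 0
        · rcases hwin j hAj with h | h
          · exact σ.hom_vanish (by rw [h]; linarith) hD (hsemi j) x
          · exact σ.hom_vanish (by rw [h]; exact hψ) hD (hsemi j) x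
      · intro ψ hψ D hD g
        apply con_vanish hEo0 htri i₁.castSucc _ g
        intro j hj x
        have hjlt : j < i₁ := Fin.succ_le_castSucc_iff.mp hj
        by_cases hAj : IsZero (A j)
        · exact hAj.eq_of_src x 0
        · rcases hwin j hAj with h | h
          · have h2 := hanti hjlt
            rw [h, hi₁φ] at h2
            exact absurd h2 (lt_irrefl φ)
          · exact σ.hom_vanish (by rw [h]; exact hψ) (hsemi j) hD x
    refine ⟨Eo i₁.castSucc, A i₁, ft i₁ ≫ e2.hom, e2.inv ≫ gt i₁, ht i₁, ?_, hX,
      hi₁φ ▸ hsemi i₁⟩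
    refine isomorphic_distinguished _ (htri i₁) _ ?_
    exact Triangle.isoMk _ _ (Iso.refl _) e2.symm (Iso.refl _)
      (by exact (Category.assoc _ _ _).trans ((congrArg (ft i₁ ≫ ·) e2.hom_inv_id).trans
              ((Category.comp_id _).trans (Category.id_comp _).symm)))
      (by exact Category.comp_id _)
      (by exact (ht i₁ ≫= CategoryTheory.Functor.map_id _ _).trans
              ((Category.comp_id _).trans (Category.id_comp _).symm))
  · push_neg at hex
    have hXC : σ.P (φ+1) C := by
      apply recog σ (φ+1) C hcovC
      intro ψ hψ D hD g
      have h2 : hiso.hom ≫ g = 0 := by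
        apply con_vanish hEo0 htri (Fin.last n) _ _
        intro j _ x
        by_cases hAj : IsZero (A j)
        · exact hAj.eq_of_src x 0
        · rcases hwin j hAj with h | h
          · exact absurd h (hex j hAj)
          · exact σ.hom_vanish (by rw [h]; exact hψ) (hsemi j) hD x
      calc g = hiso.inv ≫ (hiso.hom ≫ g) := by simp
        _ = 0 := by rw [h2, comp_zero]
    exact ⟨C, 0, 𝟙 C, 0, 0, contractible_distinguished C, hXC,
      σ.P_zero _ _ (isZero_zero T)⟩

structure KData (σ : StabilityCondition T) (φ : ℝ) {E F : T} (f : E ⟶ F) where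
  K : T
  Q : T
  hK : σ.P φ K
  hQ : σ.P φ Q
  k : K ⟶ E
  pr : F ⟶ Q
  hkf : k ≫ f = 0
  hfpr : f ≫ pr = 0
  klift : ∀ (W : T), σ.P φ W → ∀ t : W ⟶ E, t ≫ f = 0 → ∃ s : W ⟶ K, s ≫ k = t
  kcancel : ∀ (W : T), σ.P φ W → ∀ s : W ⟶ K, s ≫ k = 0 → s = 0
  qdesc : ∀ (W : T), σ.P φ W → ∀ g : F ⟶ W, f ≫ g = 0 → ∃ r : Q ⟶ W, pr ≫ r = g
  qcancel : ∀ (W : T), σ.P φ W → ∀ x : Q ⟶ W, pr ≫ x = 0 → x = 0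
  mono_part : IsZero K → ∃ (C' : T) (_ : σ.P φ C') (u' : F ⟶ C'), f ≫ u' = 0 ∧
      ∀ (W : T), σ.P φ W → ∀ t : W ⟶ F, t ≫ u' = 0 → ∃ s : W ⟶ E, s ≫ f = t
  epi_part : IsZero Q → ∃ (K' : T) (_ : σ.P φ K') (k' : K' ⟶ E), k' ≫ f = 0 ∧
      ∀ (W : T), σ.P φ W → ∀ g : E ⟶ W, k' ≫ g = 0 → ∃ r : F ⟶ W, f ≫ r = g

lemma exists_kdata (σ : StabilityCondition T) (φ : ℝ) {E F : T}
    (hE : σ.P φ E) (hF : σ.P φ F) (f : E ⟶ F) : Nonempty (KData σ φ f) := by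
  obtain ⟨C, u, w, hTc⟩ := Pretriangulated.distinguished_cocone_triangle f
  obtain ⟨X, Y, a, b, c, hsplit, hPX, hPY⟩ := cone_split σ φ hE hF hTc
  set ε : (X⟦(-1:ℤ)⟧)⟦(1:ℤ)⟧ ≅ X := shiftNegShift X (1:ℤ) with hε
  set k : X⟦(-1:ℤ)⟧ ⟶ E :=
    (shiftFunctor T (1:ℤ)).preimage (ε.hom ≫ a ≫ w) with hk
  have hkmap : (shiftFunctor T (1:ℤ)).map k = ε.hom ≫ a ≫ w :=
    (shiftFunctor T (1:ℤ)).map_preimage _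
  have hK : σ.P φ (X⟦(-1:ℤ)⟧) := by
    have := σ.P_down hPX
    rwa [add_sub_cancel_right] at this
  have hQ : σ.P φ Y := hPY
  refine ⟨⟨X⟦(-1:ℤ)⟧, Y, hK, hQ, k, u ≫ b, ?hkf, ?hfpr, ?klift, ?kcancel,
    ?qdesc, ?qcancel, ?mono, ?epi⟩⟩
  case hkf =>
    apply (shiftFunctor T (1:ℤ)).map_injective
    have h31 : w ≫ (shiftFunctor T (1:ℤ)).map f = 0 := comp_distTriang_mor_zero₃₁ _ hTc
    rw [Functor.map_comp, hkmap, Functor.map_zero, Category.assoc, Category.assoc,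
      h31, comp_zero, comp_zero]
  case hfpr =>
    have h12 : f ≫ u = 0 := comp_distTriang_mor_zero₁₂ _ hTc
    rw [← Category.assoc, h12, zero_comp]
  case klift =>
    intro W hW t ht0
    have hrot := rot_of_distTriang _ hTc
    obtain ⟨r, hr⟩ := Triangle.coyoneda_exact₃ _ hrot ((shiftFunctor T (1:ℤ)).map t)
      (by simp only [Triangle.mk_obj₁, Triangle.mk_obj₂, Triangle.mk_obj₃, Triangle.mk_mor₁, Triangle.mk_mor₂, Triangle.mk_mor₃, Triangle.rotate_obj₁, Triangle.rotate_obj₂, Triangle.rotate_obj₃, Triangle.rotate_mor₁, Triangle.rotate_mor₂, Triangle.rotate_mor₃]; exact (Preadditive.comp_neg _ _).trans (by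
        rw [neg_eq_zero]; exact ((shiftFunctor T (1:ℤ)).map_comp t f).symm.trans (by rw [ht0, Functor.map_zero]; exact rfl)))
    have hrb : r ≫ b = 0 := σ.hom_vanish (by linarith) (σ.P_up hW) hPY _
    obtain ⟨r', hr'⟩ := Triangle.coyoneda_exact₂ _ hsplit r hrb
    simp only [Triangle.mk_obj₁, Triangle.mk_obj₂, Triangle.mk_obj₃, Triangle.mk_mor₁, Triangle.mk_mor₂, Triangle.mk_mor₃, Triangle.rotate_obj₁, Triangle.rotate_obj₂, Triangle.rotate_obj₃, Triangle.rotate_mor₁, Triangle.rotate_mor₂, Triangle.rotate_mor₃] at hr hr'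
    refine ⟨(shiftFunctor T (1:ℤ)).preimage (r' ≫ ε.inv), ?_⟩
    apply (shiftFunctor T (1:ℤ)).map_injective
    rw [Functor.map_comp, (shiftFunctor T (1:ℤ)).map_preimage, hkmap]
    exact ((Category.assoc _ _ _).trans ((congrArg (r' ≫ ·) (ε.inv_hom_id_assoc _)).trans
      (Category.assoc _ _ _).symm)).trans ((congrArg (· ≫ w) hr'.symm).trans hr.symm)
  case kcancel =>
    intro W hW s hs0
    have h1 : (shiftFunctor T (1:ℤ)).map s ≫ (ε.hom ≫ a ≫ w) = 0 := by
      rw [← hkmap, ← Functor.map_comp, hs0, Functor.map_zero]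
    set x : W⟦(1:ℤ)⟧ ⟶ X := (shiftFunctor T (1:ℤ)).map s ≫ ε.hom with hx
    have h2 : (x ≫ a) ≫ w = 0 := by
      rw [hx]; simpa only [Category.assoc] using h1
    have hrot := rot_of_distTriang _ hTc
    obtain ⟨y, hy⟩ := Triangle.coyoneda_exact₂ _ hrot (x ≫ a) h2
    have hy0 : y = 0 := σ.hom_vanish (by linarith) (σ.P_up hW) hF _
    have h3 : x ≫ a = 0 := hy.trans (by rw [hy0]; exact zero_comp)
    have hinv := inv_rot_of_distTriang _ hsplit
    obtain ⟨z, hz⟩ := Triangle.coyoneda_exact₂ _ hinv x h3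
    have hz0 : z = 0 := by
      have hYm : σ.P (φ - 1) (Y⟦(-1:ℤ)⟧) := σ.P_down hPY
      exact σ.hom_vanish (by linarith) (σ.P_up hW) hYm _
    have hx0 : x = 0 := hz.trans (by rw [hz0]; exact zero_comp)
    apply (shiftFunctor T (1:ℤ)).map_injective
    rw [Functor.map_zero]
    calc (shiftFunctor T (1:ℤ)).map s
        = ((shiftFunctor T (1:ℤ)).map s ≫ ε.hom) ≫ ε.inv := by simp
      _ = 0 := by rw [← hx, hx0, zero_comp]
  case qdesc =>
    intro W hW g hg0
    obtain ⟨r, hr⟩ := Triangle.yoneda_exact₂ _ hTc g hg0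
    have har : a ≫ r = 0 := σ.hom_vanish (by linarith) hPX hW _
    obtain ⟨rb, hrb⟩ := Triangle.yoneda_exact₂ _ hsplit r har
    simp only [Triangle.mk_obj₁, Triangle.mk_obj₂, Triangle.mk_obj₃, Triangle.mk_mor₁, Triangle.mk_mor₂, Triangle.mk_mor₃, Triangle.rotate_obj₁, Triangle.rotate_obj₂, Triangle.rotate_obj₃, Triangle.rotate_mor₁, Triangle.rotate_mor₂, Triangle.rotate_mor₃] at hr hrb
    exact ⟨rb, by rw [hr, hrb]; exact Category.assoc _ _ _⟩
  case qcancel =>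
    intro W hW x hx0
    have h1 : u ≫ (b ≫ x) = 0 := by rw [← Category.assoc]; exact hx0
    obtain ⟨y, hy⟩ := Triangle.yoneda_exact₃ _ hTc (b ≫ x) h1
    have hy0 : y = 0 := σ.hom_vanish (by linarith) (σ.P_up hE) hW _
    have h2 : b ≫ x = 0 := hy.trans (by rw [hy0]; exact comp_zero)
    obtain ⟨z, hz⟩ := Triangle.yoneda_exact₃ _ hsplit x h2
    have hz0 : z = 0 := σ.hom_vanish (by linarith) (σ.P_up hPX) hW _
    rw [hz, hz0]; exact comp_zero
  case mono =>
    intro hKz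
    have hXz : IsZero X :=
      IsZero.of_iso ((shiftFunctor T (1:ℤ)).map_isZero hKz) ε.symm
    have hbiso : IsIso b := (Triangle.isZero₁_iff_isIso₂ _ hsplit).mp hXz
    have hC : σ.P φ C := σ.P_iso _ (asIso b).symm hPY
    refine ⟨C, hC, u, comp_distTriang_mor_zero₁₂ _ hTc, ?_⟩
    intro W hW t ht0
    obtain ⟨s, hs⟩ := Triangle.coyoneda_exact₂ _ hTc t ht0
    exact ⟨s, hs.symm⟩
  case epi =>
    intro hQz
    have haiso : IsIso a := (Triangle.isZero₃_iff_isIso₁ _ hsplit).mp hQz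
    have hC : σ.P (φ+1) C := σ.P_iso _ (asIso a) hPX
    have hK' : σ.P φ (C⟦(-1:ℤ)⟧) := by
      have := σ.P_down hC
      rwa [add_sub_cancel_right] at this
    have hinv := inv_rot_of_distTriang _ hTc
    refine ⟨C⟦(-1:ℤ)⟧, hK', (Triangle.mk f u w).invRotate.mor₁,
      comp_distTriang_mor_zero₁₂ _ hinv, ?_⟩
    intro W hW g hg0
    obtain ⟨r, hr⟩ := Triangle.yoneda_exact₂ _ hinv g hg0
    exact ⟨r, hr.symm⟩

theorem main (σ : StabilityCondition T) (φ : ℝ) :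
    Nonempty (Abelian (ObjectProperty.FullSubcategory fun E : T => σ.P φ E)) := by
  classical
  haveI hzo : HasZeroObject (ObjectProperty.FullSubcategory fun E : T => σ.P φ E) := by
    refine ⟨⟨(0 : T), σ.P_zero φ 0 (isZero_zero T)⟩, ?_⟩
    rw [Limits.IsZero.iff_id_eq_zero]
    ext
  have hPbi : ∀ Xo Yo : ObjectProperty.FullSubcategory fun E : T => σ.P φ E,
      σ.P φ (Xo.obj ⊞ Yo.obj) := by
    intro Xo Yo
    apply recog σ φ
    · intro ψ hψ D hD g
      apply biprod.hom_ext
      · rw [zero_comp]; exact σ.hom_vanish hψ hD Xo.property _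
      · rw [zero_comp]; exact σ.hom_vanish hψ hD Yo.property _
    · intro ψ hψ D hD g
      apply biprod.hom_ext'
      · rw [comp_zero]; exact σ.hom_vanish hψ Xo.property hD _
      · rw [comp_zero]; exact σ.hom_vanish hψ Yo.property hD _
  haveI hbb : HasBinaryBiproducts (ObjectProperty.FullSubcategory fun E : T => σ.P φ E) := by
    constructor
    intro Xo Yo
    exact hasBinaryBiproduct_of_total
      { pt := ⟨Xo.obj ⊞ Yo.obj, hPbi Xo Yo⟩
        fst := ObjectProperty.homMk (biprod.fst : Xo.obj ⊞ Yo.obj ⟶ Xo.obj)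
        snd := ObjectProperty.homMk (biprod.snd : Xo.obj ⊞ Yo.obj ⟶ Yo.obj)
        inl := ObjectProperty.homMk (biprod.inl : Xo.obj ⟶ Xo.obj ⊞ Yo.obj)
        inr := ObjectProperty.homMk (biprod.inr : Yo.obj ⟶ Xo.obj ⊞ Yo.obj)
        inl_fst := by ext; exact biprod.inl_fst
        inl_snd := by ext; exact biprod.inl_snd
        inr_fst := by ext; exact biprod.inr_fst
        inr_snd := by ext; exact biprod.inr_snd }
      (by apply InducedCategory.hom_ext; exact (biprod.total : biprod.fst ≫ biprod.inl + biprod.snd ≫ biprod.inr = 𝟙 (Xo.obj ⊞ Yo.obj)))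
  haveI hfp : HasFiniteProducts (ObjectProperty.FullSubcategory fun E : T => σ.P φ E) :=
    hasFiniteProducts_of_has_binary_and_terminal
  haveI hker : HasKernels (ObjectProperty.FullSubcategory fun E : T => σ.P φ E) := by
    constructor
    intro Xo Yo fm
    obtain ⟨kd⟩ := exists_kdata σ φ Xo.property Yo.property fm.hom
    refine HasLimit.mk ⟨KernelFork.ofι
      (ObjectProperty.homMk kd.k : (⟨kd.K, kd.hK⟩ : ObjectProperty.FullSubcategory fun E : T => σ.P φ E) ⟶ Xo)
      (by ext; exact kd.hkf), ?_⟩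
    refine KernelFork.IsLimit.ofι _ _
      (fun {W'} t ht => ObjectProperty.homMk
        (Classical.choose (kd.klift W'.obj W'.property t.hom (congrArg InducedCategory.Hom.hom ht))))
      (fun {W'} t ht => by
        ext; exact Classical.choose_spec (kd.klift W'.obj W'.property t.hom (congrArg InducedCategory.Hom.hom ht)))
      ?_
    intro W' t ht m hm
    have hs := Classical.choose_spec (kd.klift W'.obj W'.property t.hom (congrArg InducedCategory.Hom.hom ht))
    set s := Classical.choose (kd.klift W'.obj W'.property t.hom (congrArg InducedCategory.Hom.hom ht))
    have hm' : m.hom ≫ kd.k = t.hom := congrArg InducedCategory.Hom.hom hm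
    have h0 : (m.hom - s) ≫ kd.k = 0 := by
      rw [Preadditive.sub_comp, hm', hs, sub_self]
    have hms : m.hom - s = 0 := kd.kcancel W'.obj W'.property (m.hom - s) h0
    ext
    exact sub_eq_zero.mp hms
  haveI hcoker : HasCokernels (ObjectProperty.FullSubcategory fun E : T => σ.P φ E) := by
    constructor
    intro Xo Yo fm
    obtain ⟨kd⟩ := exists_kdata σ φ Xo.property Yo.property fm.hom
    refine HasColimit.mk ⟨CokernelCofork.ofπ
      (ObjectProperty.homMk kd.pr : Yo ⟶ (⟨kd.Q, kd.hQ⟩ : ObjectProperty.FullSubcategory fun E : T => σ.P φ E))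
      (by ext; exact kd.hfpr), ?_⟩
    refine CokernelCofork.IsColimit.ofπ _ _
      (fun {W'} g hg => ObjectProperty.homMk
        (Classical.choose (kd.qdesc W'.obj W'.property g.hom (congrArg InducedCategory.Hom.hom hg))))
      (fun {W'} g hg => by
        ext; exact Classical.choose_spec (kd.qdesc W'.obj W'.property g.hom (congrArg InducedCategory.Hom.hom hg)))
      ?_
    intro W' g hg m hm
    have hs := Classical.choose_spec (kd.qdesc W'.obj W'.property g.hom (congrArg InducedCategory.Hom.hom hg))
    set s := Classical.choose (kd.qdesc W'.obj W'.property g.hom (congrArg InducedCategory.Hom.hom hg))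
    have hm' : kd.pr ≫ m.hom = g.hom := congrArg InducedCategory.Hom.hom hm
    have h0 : kd.pr ≫ (m.hom - s) = 0 := by
      rw [Preadditive.comp_sub, hm', hs, sub_self]
    have hms : m.hom - s = 0 := kd.qcancel W'.obj W'.property (m.hom - s) h0
    ext
    exact sub_eq_zero.mp hms
  have hnm : ∀ {Xo Yo : ObjectProperty.FullSubcategory fun E : T => σ.P φ E} (fm : Xo ⟶ Yo),
      Mono fm → Nonempty (NormalMono fm) := by
    intro Xo Yo fm hm
    obtain ⟨kd⟩ := exists_kdata σ φ Xo.property Yo.property fm.hom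
    have hk0 : (ObjectProperty.homMk kd.k : (⟨kd.K, kd.hK⟩ : ObjectProperty.FullSubcategory fun E : T => σ.P φ E) ⟶ Xo) = 0 := by
      rw [← cancel_mono fm, zero_comp]
      ext
      exact kd.hkf
    have hKz : IsZero kd.K := by
      rw [Limits.IsZero.iff_id_eq_zero]
      have h1 : 𝟙 kd.K ≫ kd.k = 0 := by
        rw [Category.id_comp]
        exact congrArg InducedCategory.Hom.hom hk0
      exact kd.kcancel kd.K kd.hK (𝟙 kd.K) h1
    obtain ⟨C', hC', u', hfu', hlift⟩ := kd.mono_part hKz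
    refine ⟨⟨(⟨C', hC'⟩ : ObjectProperty.FullSubcategory fun E : T => σ.P φ E),
      (ObjectProperty.homMk u' : Yo ⟶ (⟨C', hC'⟩ : ObjectProperty.FullSubcategory fun E : T => σ.P φ E)), by ext; exact hfu', ?_⟩⟩
    refine KernelFork.IsLimit.ofι _ _
      (fun {W'} t ht => ObjectProperty.homMk
        (Classical.choose (hlift W'.obj W'.property t.hom (congrArg InducedCategory.Hom.hom ht))))
      (fun {W'} t ht => by
        ext; exact Classical.choose_spec (hlift W'.obj W'.property t.hom (congrArg InducedCategory.Hom.hom ht)))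
      ?_
    intro W' t ht m hm2
    have hs := Classical.choose_spec (hlift W'.obj W'.property t.hom (congrArg InducedCategory.Hom.hom ht))
    rw [← cancel_mono fm, hm2]
    ext
    exact hs.symm
  have hne : ∀ {Xo Yo : ObjectProperty.FullSubcategory fun E : T => σ.P φ E} (fm : Xo ⟶ Yo),
      Epi fm → Nonempty (NormalEpi fm) := by
    intro Xo Yo fm he
    obtain ⟨kd⟩ := exists_kdata σ φ Xo.property Yo.property fm.hom
    have hpr0 : (ObjectProperty.homMk kd.pr : Yo ⟶ (⟨kd.Q, kd.hQ⟩ : ObjectProperty.FullSubcategory fun E : T => σ.P φ E)) = 0 := by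
      rw [← cancel_epi fm, comp_zero]
      ext
      exact kd.hfpr
    have hQz : IsZero kd.Q := by
      rw [Limits.IsZero.iff_id_eq_zero]
      have h1 : kd.pr ≫ 𝟙 kd.Q = 0 := by
        rw [Category.comp_id]
        exact congrArg InducedCategory.Hom.hom hpr0
      exact kd.qcancel kd.Q kd.hQ (𝟙 kd.Q) h1
    obtain ⟨K', hK', k', hk'f, hdesc⟩ := kd.epi_part hQz
    refine ⟨⟨(⟨K', hK'⟩ : ObjectProperty.FullSubcategory fun E : T => σ.P φ E),
      (ObjectProperty.homMk k' : (⟨K', hK'⟩ : ObjectProperty.FullSubcategory fun E : T => σ.P φ E) ⟶ Xo), by ext; exact hk'f, ?_⟩⟩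
    refine CokernelCofork.IsColimit.ofπ _ _
      (fun {W'} g hg => ObjectProperty.homMk
        (Classical.choose (hdesc W'.obj W'.property g.hom (congrArg InducedCategory.Hom.hom hg))))
      (fun {W'} g hg => by
        ext; exact Classical.choose_spec (hdesc W'.obj W'.property g.hom (congrArg InducedCategory.Hom.hom hg)))
      ?_
    intro W' g hg m hm2
    have hs := Classical.choose_spec (hdesc W'.obj W'.property g.hom (congrArg InducedCategory.Hom.hom hg))
    rw [← cancel_epi fm, hm2]
    ext
    exact hs.symm
  refine ⟨{ toPreadditive := inferInstance
            toIsNormalMonoCategory := ⟨fun {Xo Yo} fm hm => hnm fm hm⟩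
            toIsNormalEpiCategory := ⟨fun {Xo Yo} fm he => hne fm he⟩ }⟩

end StabilityProof


end Auxiliary

theorem stmt_4 {T : Type u} [Category.{v} T] [HasZeroObject T]
    [Preadditive T] [HasShift T ℤ] [∀ n : ℤ, (shiftFunctor T n).Additive]
    [Pretriangulated T] (σ : StabilityCondition T) (φ : ℝ) :
    Nonempty (Abelian (ObjectProperty.FullSubcategory fun E : T => σ.P φ E)) :=
  StabilityProof.main σ φ
end

section
/- Let A be an abelian category and Z a centered slope function on A with the Harder–Narasimhan property. Then the HN filtration of each nonzero object E is unique: if 0 = E₀ ⊂ ⋯ ⊂ E_n = E and 0 = E′₀ ⊂ ⋯ ⊂ E′_m = E are two filtrations with semistable quotients of strictly decreasing phases, then n = m and E_j = E′_j (as subobjects of E) for all j. -/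
/-!
STATEMENT 11: Uniqueness of Harder–Narasimhan filtrations: given a centered
slope function with the HN property on an abelian category, any two filtrations
of a nonzero object `E` by subobjects with semistable quotients of strictly
decreasing phase have the same length and coincide (as chains of subobjects).
-/

open CategoryTheory CategoryTheory.Limits

/-- `E` is semistable for the phase function `φ`. -/
def SlopeSemistable {𝒜 : Type*} [Category 𝒜] [Abelian 𝒜] (φ : 𝒜 → ℝ) (E : 𝒜) : Prop :=
  ¬ IsZero E ∧ ∀ (A : 𝒜) (f : A ⟶ E), Mono f → ¬ IsZero A → φ A ≤ φ E

/-- A Harder–Narasimhan filtration `0 = E₀ ⊂ E₁ ⊂ ⋯ ⊂ Eₙ = E` of `E` by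
subobjects, with semistable quotients `F_j = E_j / E_{j−1}` of strictly
decreasing phase. -/
structure HNFiltration {𝒜 : Type*} [Category 𝒜] [Abelian 𝒜]
    (φ : 𝒜 → ℝ) (E : 𝒜) where
  n : ℕ
  s : Fin (n + 1) → Subobject E
  strict : StrictMono s
  bot : s 0 = ⊥
  top : s (Fin.last n) = ⊤
  semistable : ∀ i : Fin n,
    SlopeSemistable φ (cokernel (Subobject.ofLE (s i.castSucc) (s i.succ)
      (strict.monotone (Fin.castSucc_le_succ i))))
  decreasing : ∀ i j : Fin n, i < j →
    φ (cokernel (Subobject.ofLE (s j.castSucc) (s j.succ)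
        (strict.monotone (Fin.castSucc_le_succ j)))) <
      φ (cokernel (Subobject.ofLE (s i.castSucc) (s i.succ)
        (strict.monotone (Fin.castSucc_le_succ i))))

/-! ### Auxiliary analytic lemmas -/

set_option linter.unusedSectionVars false

lemma HNaux.sin_pi_mul_pos {d : ℝ} (h1 : -1 < d) (h2 : d < 1) :
    0 < Real.sin (Real.pi * d) ↔ 0 < d := by
  constructor
  · intro h
    by_contra hd
    push_neg at hd
    rcases eq_or_lt_of_le hd with h0 | h0
    · rw [h0, mul_zero, Real.sin_zero] at h; exact lt_irrefl 0 h
    · have : Real.sin (Real.pi * d) < 0 := by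
        have : 0 < Real.sin (Real.pi * (-d)) :=
          Real.sin_pos_of_pos_of_lt_pi (by nlinarith [Real.pi_pos])
            (by nlinarith [Real.pi_pos])
        rw [mul_neg, Real.sin_neg] at this; linarith
      linarith
  · intro h
    exact Real.sin_pos_of_pos_of_lt_pi (by nlinarith [Real.pi_pos])
      (by nlinarith [Real.pi_pos])

section phase
variable {𝒜 : Type*} [Category 𝒜] [Abelian 𝒜] (Z : 𝒜 → ℂ) (m φ : 𝒜 → ℝ)
variable (hc : ∀ E : 𝒜, ¬ IsZero E →
      0 < m E ∧ φ E ∈ Set.Ioc (0 : ℝ) 1 ∧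
        Z E = (m E : ℂ) * Complex.exp ((Real.pi * φ E : ℝ) * Complex.I))

include hc in
lemma HNaux.phase_im (X Y : 𝒜) (hX : ¬ IsZero X) (hY : ¬ IsZero Y) :
    ((starRingEnd ℂ) (Z X) * Z Y).im
      = m X * m Y * Real.sin (Real.pi * (φ Y - φ X)) := by
  obtain ⟨hmX, hφX, hZX⟩ := hc X hX
  obtain ⟨hmY, hφY, hZY⟩ := hc Y hY
  rw [hZX, hZY, Complex.exp_mul_I, Complex.exp_mul_I,
    (Complex.ofReal_cos (Real.pi * φ X)).symm, (Complex.ofReal_sin (Real.pi * φ X)).symm,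
    (Complex.ofReal_cos (Real.pi * φ Y)).symm, (Complex.ofReal_sin (Real.pi * φ Y)).symm]
  simp only [Complex.mul_im, Complex.mul_re, Complex.add_im, Complex.add_re,
    Complex.ofReal_re, Complex.ofReal_im, Complex.I_re, Complex.I_im, Complex.conj_re,
    Complex.conj_im, mul_sub, Real.sin_sub]
  ring

include hc in
lemma HNaux.phase_le_iff (X Y : 𝒜) (hX : ¬ IsZero X) (hY : ¬ IsZero Y) :
    φ X ≤ φ Y ↔ 0 ≤ ((starRingEnd ℂ) (Z X) * Z Y).im := by
  obtain ⟨hmX, hφX, -⟩ := hc X hX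
  obtain ⟨hmY, hφY, -⟩ := hc Y hY
  rw [HNaux.phase_im Z m φ hc X Y hX hY]
  have h1 : -1 < φ Y - φ X := by cases hφX; cases hφY; simp at *; linarith
  have h2 : φ Y - φ X < 1 := by cases hφX; cases hφY; simp at *; linarith
  constructor
  · intro h
    rcases eq_or_lt_of_le h with h0 | h0
    · simp [h0.symm]
    · have := (HNaux.sin_pi_mul_pos h1 h2).mpr (by linarith)
      positivity
  · intro h
    by_contra hlt
    push_neg at hlt
    have hs : 0 < Real.sin (Real.pi * (φ X - φ Y)) :=
      (HNaux.sin_pi_mul_pos (by linarith) (by linarith)).mpr (by linarith)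
    have : Real.sin (Real.pi * (φ Y - φ X)) < 0 := by
      have := Real.sin_neg (Real.pi * (φ X - φ Y))
      rw [show -(Real.pi * (φ X - φ Y)) = Real.pi * (φ Y - φ X) by ring] at this
      linarith
    nlinarith [mul_pos hmX hmY]

include hc in
lemma HNaux.phase_eq_of_Z_eq (X Y : 𝒜) (hX : ¬ IsZero X) (hY : ¬ IsZero Y)
    (h : Z X = Z Y) : φ X = φ Y := by
  have h1 := (HNaux.phase_le_iff Z m φ hc X Y hX hY).mpr
    (by rw [h]; simp [Complex.mul_im, mul_comm])
  have h2 := (HNaux.phase_le_iff Z m φ hc Y X hY hX).mpr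
    (by rw [h]; simp [Complex.mul_im, mul_comm])
  linarith

include hc in
lemma HNaux.seesaw (A B C : 𝒜) (hA : ¬ IsZero A) (hB : ¬ IsZero B) (hC : ¬ IsZero C)
    (hZ : Z B = Z A + Z C) (h : φ A ≤ φ B) : φ B ≤ φ C := by
  rw [HNaux.phase_le_iff Z m φ hc A B hA hB] at h
  rw [HNaux.phase_le_iff Z m φ hc B C hB hC]
  have key : ((starRingEnd ℂ) (Z B) * Z C).im = ((starRingEnd ℂ) (Z A) * Z B).im := by
    rw [hZ]
    simp [Complex.mul_im, Complex.add_im, Complex.add_re]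
    ring
  rw [key]; exact h
end phase

/-! ### Auxiliary categorical lemmas -/

section cat
variable {𝒜 : Type*} [Category 𝒜] [Abelian 𝒜]

/-- the short complex `A ⟶ B ⟶ cokernel f` for a mono `f` is short exact -/
lemma HNaux.ses_of_mono {A B : 𝒜} (f : A ⟶ B) [Mono f] :
    (ShortComplex.mk f (cokernel.π f) (cokernel.condition f)).ShortExact :=
  { exact := ShortComplex.exact_of_g_is_cokernel _ (cokernelIsCokernel f) }

lemma HNaux.Z_zero_of_isZero (Z : 𝒜 → ℂ)
    (hZadd : ∀ (S : ShortComplex 𝒜), S.ShortExact → Z S.X₂ = Z S.X₁ + Z S.X₃)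
    {X : 𝒜} (hX : IsZero X) : Z X = 0 := by
  have hmono : Mono (0 : X ⟶ X) := ⟨fun g h _ => hX.eq_of_tgt g h⟩
  have hepi : Epi (0 : X ⟶ X) := ⟨fun g h _ => hX.eq_of_src g h⟩
  have hse : (ShortComplex.mk (0 : X ⟶ X) (0 : X ⟶ X) (by simp)).ShortExact :=
    { exact := ShortComplex.exact_of_isZero_X₂ _ hX, mono_f := hmono, epi_g := hepi }
  have := hZadd _ hse
  simp at this
  exact this

lemma HNaux.le_of_comp_cokernel_zero {E : 𝒜} {B C D : Subobject E} (hBD : B ≤ D) (hCD : C ≤ D)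
    (hz : Subobject.ofLE B D hBD ≫ cokernel.π (Subobject.ofLE C D hCD) = 0) : B ≤ C := by
  refine Subobject.le_of_comm
    (Abelian.monoLift (Subobject.ofLE C D hCD) (Subobject.ofLE B D hBD) hz) ?_
  have h := Abelian.monoLift_comp (Subobject.ofLE C D hCD) (Subobject.ofLE B D hBD) hz
  calc Abelian.monoLift (Subobject.ofLE C D hCD) (Subobject.ofLE B D hBD) hz ≫ C.arrow
      = Abelian.monoLift (Subobject.ofLE C D hCD) (Subobject.ofLE B D hBD) hz ≫
          Subobject.ofLE C D hCD ≫ D.arrow := by rw [Subobject.ofLE_arrow]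
    _ = Subobject.ofLE B D hBD ≫ D.arrow := by rw [← Category.assoc, h]
    _ = B.arrow := Subobject.ofLE_arrow hBD

lemma HNaux.comp_cokernel_zero_of_le {E : 𝒜} {B C D : Subobject E} (hBC : B ≤ C) (hCD : C ≤ D) :
    Subobject.ofLE B D (hBC.trans hCD) ≫ cokernel.π (Subobject.ofLE C D hCD) = 0 := by
  rw [← Subobject.ofLE_comp_ofLE B C D hBC hCD, Category.assoc, cokernel.condition, comp_zero]

end cat

section homvanish
variable {𝒜 : Type*} [Category 𝒜] [Abelian 𝒜] (Z : 𝒜 → ℂ) (m φ : 𝒜 → ℝ)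
variable (hZadd : ∀ (S : ShortComplex 𝒜), S.ShortExact → Z S.X₂ = Z S.X₁ + Z S.X₃)
variable (hc : ∀ E : 𝒜, ¬ IsZero E →
      0 < m E ∧ φ E ∈ Set.Ioc (0 : ℝ) 1 ∧
        Z E = (m E : ℂ) * Complex.exp ((Real.pi * φ E : ℝ) * Complex.I))

include hZadd hc in
/-- No nonzero morphisms from a semistable object of higher phase to one of lower phase. -/
lemma HNaux.hom_zero_of_phase_lt {A B : 𝒜} (hA : SlopeSemistable φ A) (hB : SlopeSemistable φ B)
    (hφ : φ B < φ A) (f : A ⟶ B) : f = 0 := by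
  by_contra hf
  set I : 𝒜 := Abelian.coimage f with hIdef
  have hfac : Abelian.coimage.π f ≫ Abelian.factorThruCoimage f = f := Abelian.coimage.fac f
  have hInz : ¬ IsZero I := by
    intro hI
    apply hf
    rw [← hfac, hI.eq_of_src (Abelian.factorThruCoimage f) 0, comp_zero]
  have hIB : φ I ≤ φ B := hB.2 I (Abelian.factorThruCoimage f) inferInstance hInz
  have hse := HNaux.ses_of_mono (kernel.ι f)
  have hZA : Z A = Z (kernel f) + Z I := hZadd _ hse
  have hAI : φ A ≤ φ I := by
    by_cases hK : IsZero (kernel f)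
    · have : Z A = Z I := by rw [hZA, HNaux.Z_zero_of_isZero Z hZadd hK, zero_add]
      exact le_of_eq (HNaux.phase_eq_of_Z_eq Z m φ hc A I hA.1 hInz this)
    · have hKA : φ (kernel f) ≤ φ A := hA.2 (kernel f) (kernel.ι f) inferInstance hK
      exact HNaux.seesaw Z m φ hc (kernel f) A I hK hA.1 hInz hZA hKA
  linarith
end homvanish

/-! ### The quotient objects of an HN filtration -/

/-- The `i`-th graded piece of an HN filtration. -/
noncomputable def HNquot {𝒜 : Type*} [Category 𝒜] [Abelian 𝒜] {φ : 𝒜 → ℝ} {E : 𝒜}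
    (H : HNFiltration φ E) (i : Fin H.n) : 𝒜 :=
  cokernel (Subobject.ofLE (H.s i.castSucc) (H.s i.succ)
    (H.strict.monotone (Fin.castSucc_le_succ i)))

lemma HNquot_semistable {𝒜 : Type*} [Category 𝒜] [Abelian 𝒜] {φ : 𝒜 → ℝ} {E : 𝒜}
    (H : HNFiltration φ E) (i : Fin H.n) : SlopeSemistable φ (HNquot H i) :=
  H.semistable i

section step
variable {𝒜 : Type*} [Category 𝒜] [Abelian 𝒜] (Z : 𝒜 → ℂ) (m φ : 𝒜 → ℝ)
variable (hZadd : ∀ (S : ShortComplex 𝒜), S.ShortExact → Z S.X₂ = Z S.X₁ + Z S.X₃)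
variable (hc : ∀ E : 𝒜, ¬ IsZero E →
      0 < m E ∧ φ E ∈ Set.Ioc (0 : ℝ) 1 ∧
        Z E = (m E : ℂ) * Complex.exp ((Real.pi * φ E : ℝ) * Complex.I))

include hZadd hc in
lemma HNaux.hn_step {E : 𝒜} (F G : HNFiltration φ E)
    (i : Fin F.n) (i' : Fin G.n) (hii' : (i : ℕ) = (i' : ℕ))
    (heq : F.s i.castSucc = G.s i'.castSucc) :
    ∃ k : Fin G.n, (i' : ℕ) ≤ (k : ℕ) ∧ F.s i.succ ≤ G.s k.succ ∧
      φ (HNquot F i) ≤ φ (HNquot G k) := by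
  classical
  set B : Subobject E := F.s i.succ with hBdef
  have hP : ∃ t : ℕ, ∃ h : t < G.n + 1, B ≤ G.s ⟨t, h⟩ := by
    refine ⟨G.n, Nat.lt_succ_self _, ?_⟩
    have : (⟨G.n, Nat.lt_succ_self _⟩ : Fin (G.n + 1)) = Fin.last G.n := rfl
    rw [this, G.top]
    exact le_top
  have hPex : ∃ t : ℕ, ∃ h : t < G.n + 1, B ≤ G.s ⟨t, h⟩ := hP
  obtain ⟨hk0lt, hk0le⟩ := Nat.find_spec hPex
  -- the minimal index is > i'
  have hk0gt : (i' : ℕ) < Nat.find hPex := by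
    by_contra hle
    push_neg at hle
    have h1 : G.s ⟨Nat.find hPex, hk0lt⟩ ≤ G.s i'.castSucc :=
      G.strict.monotone (by simpa [Fin.le_def] using hle)
    have h2 : B ≤ F.s i.castSucc := le_trans hk0le (h1.trans (le_of_eq heq.symm))
    have h3 : F.s i.castSucc < B := F.strict (show i.castSucc < i.succ from Fin.castSucc_lt_succ)
    exact absurd (lt_of_le_of_lt h2 h3) (lt_irrefl B)
  obtain ⟨k1, hk1eq⟩ : ∃ k1, Nat.find hPex = k1 + 1 := ⟨Nat.find hPex - 1, by omega⟩
  have hk1n : k1 < G.n := by omega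
  set k : Fin G.n := ⟨k1, hk1n⟩ with hkdef
  have hcs : G.s k.castSucc ≤ G.s k.succ := G.strict.monotone (Fin.castSucc_le_succ k)
  have hBk1 : B ≤ G.s k.succ := by
    have e : (⟨Nat.find hPex, hk0lt⟩ : Fin (G.n + 1)) = k.succ := by
      ext; show Nat.find hPex = k1 + 1; exact hk1eq
    rwa [e] at hk0le
  have hnotle : ¬ B ≤ G.s k.castSucc := by
    intro hle
    exact Nat.find_min hPex (m := k1) (by omega) ⟨by omega, hle⟩
  set u := Subobject.ofLE B (G.s k.succ) hBk1 ≫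
      cokernel.π (Subobject.ofLE (G.s k.castSucc) (G.s k.succ)
        (G.strict.monotone (Fin.castSucc_le_succ k))) with hudef
  have hu : u ≠ 0 := fun h0 => hnotle (HNaux.le_of_comp_cokernel_zero hBk1 _ h0)
  have hii'le : (i' : ℕ) ≤ k1 := by omega
  have hiCle : F.s i.castSucc ≤ G.s k.castSucc := by
    rw [heq]
    exact G.strict.monotone (show i'.castSucc ≤ k.castSucc from Fin.le_def.mpr hii'le)
  have hFle : F.s i.castSucc ≤ B := (F.strict.monotone (Fin.castSucc_le_succ i))
  have hkill : Subobject.ofLE (F.s i.castSucc) B hFle ≫ u = 0 := by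
    rw [hudef, ← Category.assoc, Subobject.ofLE_comp_ofLE]
    exact HNaux.comp_cokernel_zero_of_le hiCle _
  set ψ : HNquot F i ⟶ HNquot G k :=
    cokernel.desc (Subobject.ofLE (F.s i.castSucc) (F.s i.succ)
      (F.strict.monotone (Fin.castSucc_le_succ i))) u hkill with hψdef
  have hψ : ψ ≠ 0 := by
    intro h0
    apply hu
    rw [← cokernel.π_desc (Subobject.ofLE (F.s i.castSucc) (F.s i.succ)
      (F.strict.monotone (Fin.castSucc_le_succ i))) u hkill]
    change cokernel.π _ ≫ ψ = 0
    rw [h0]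
    exact comp_zero
  refine ⟨k, hii'le, hBk1, ?_⟩
  by_contra hlt
  push_neg at hlt
  exact hψ (HNaux.hom_zero_of_phase_lt Z m φ hZadd hc
    (HNquot_semistable F i) (HNquot_semistable G k) hlt ψ)
end step

theorem stmt_11 {𝒜 : Type*} [Category 𝒜] [Abelian 𝒜]
    (Z : 𝒜 → ℂ) (m φ : 𝒜 → ℝ)
    -- additivity of `Z` over short exact sequences:
    (hZadd : ∀ (S : ShortComplex 𝒜), S.ShortExact → Z S.X₂ = Z S.X₁ + Z S.X₃)
    (hZiso : ∀ (X Y : 𝒜), (X ≅ Y) → Z X = Z Y)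
    -- `Z` is a centered slope function with mass `m` and phase `φ`:
    (hcentered : ∀ E : 𝒜, ¬ IsZero E →
      0 < m E ∧ φ E ∈ Set.Ioc (0 : ℝ) 1 ∧
        Z E = (m E : ℂ) * Complex.exp ((Real.pi * φ E : ℝ) * Complex.I))
    (E : 𝒜) (hE : ¬ IsZero E)
    (F G : HNFiltration φ E) :
    F.n = G.n ∧
      ∀ (j : ℕ) (hF : j < F.n + 1) (hG : j < G.n + 1), F.s ⟨j, hF⟩ = G.s ⟨j, hG⟩ := by
  have key : ∀ j : ℕ, ∀ (hjF : j < F.n + 1) (hjG : j < G.n + 1),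
      F.s ⟨j, hjF⟩ = G.s ⟨j, hjG⟩ := by
    intro j
    induction j with
    | zero =>
      intro hjF hjG
      have e1 : (⟨0, hjF⟩ : Fin (F.n + 1)) = 0 := by ext; simp
      have e2 : (⟨0, hjG⟩ : Fin (G.n + 1)) = 0 := by ext; simp
      rw [e1, e2, F.bot, G.bot]
    | succ j ih =>
      intro hjF hjG
      have hjF' : j < F.n := by omega
      have hjG' : j < G.n := by omega
      have heq : F.s (⟨j, hjF'⟩ : Fin F.n).castSucc = G.s (⟨j, hjG'⟩ : Fin G.n).castSucc :=
        ih (by omega) (by omega)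
      obtain ⟨k, hk1, hk2, hk3⟩ := HNaux.hn_step Z m φ hZadd hcentered F G
        ⟨j, hjF'⟩ ⟨j, hjG'⟩ rfl heq
      obtain ⟨l, hl1, hl2, hl3⟩ := HNaux.hn_step Z m φ hZadd hcentered G F
        ⟨j, hjG'⟩ ⟨j, hjF'⟩ rfl heq.symm
      -- phase comparisons
      have hGk : φ (HNquot G k) ≤ φ (HNquot G ⟨j, hjG'⟩) := by
        rcases eq_or_lt_of_le hk1 with h | h
        · have : k = ⟨j, hjG'⟩ := by ext; omega
          rw [this]
        · exact le_of_lt (G.decreasing ⟨j, hjG'⟩ k (by simpa [Fin.lt_def] using h))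
      have hFl : φ (HNquot F l) ≤ φ (HNquot F ⟨j, hjF'⟩) := by
        rcases eq_or_lt_of_le hl1 with h | h
        · have : l = ⟨j, hjF'⟩ := by ext; omega
          rw [this]
        · exact le_of_lt (F.decreasing ⟨j, hjF'⟩ l (by simpa [Fin.lt_def] using h))
      have hall : φ (HNquot G k) = φ (HNquot G ⟨j, hjG'⟩) := by
        have c1 : φ (HNquot F ⟨j, hjF'⟩) ≤ φ (HNquot G k) := hk3
        have c2 : φ (HNquot G ⟨j, hjG'⟩) ≤ φ (HNquot F l) := hl3
        linarith
      have hall' : φ (HNquot F l) = φ (HNquot F ⟨j, hjF'⟩) := by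
        have c1 : φ (HNquot F ⟨j, hjF'⟩) ≤ φ (HNquot G k) := hk3
        have c2 : φ (HNquot G ⟨j, hjG'⟩) ≤ φ (HNquot F l) := hl3
        linarith
      have hkj : k = ⟨j, hjG'⟩ := by
        by_contra hne
        have h : (⟨j, hjG'⟩ : Fin G.n) < k := by
          rcases eq_or_lt_of_le hk1 with h | h
          · exact absurd (by ext; omega : k = ⟨j, hjG'⟩) hne
          · simpa [Fin.lt_def] using h
        exact absurd hall (ne_of_lt (G.decreasing ⟨j, hjG'⟩ k h))
      have hlj : l = ⟨j, hjF'⟩ := by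
        by_contra hne
        have h : (⟨j, hjF'⟩ : Fin F.n) < l := by
          rcases eq_or_lt_of_le hl1 with h | h
          · exact absurd (by ext; omega : l = ⟨j, hjF'⟩) hne
          · simpa [Fin.lt_def] using h
        exact absurd hall' (ne_of_lt (F.decreasing ⟨j, hjF'⟩ l h))
      rw [hkj] at hk2
      rw [hlj] at hl2
      exact le_antisymm hk2 hl2
  have hn : F.n = G.n := by
    by_contra hne
    rcases Nat.lt_or_ge F.n G.n with h | h
    · have h1 := key F.n (Nat.lt_succ_self _) (by omega)
      have e1 : (⟨F.n, Nat.lt_succ_self _⟩ : Fin (F.n + 1)) = Fin.last F.n := rfl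
      rw [e1, F.top] at h1
      have h2 : G.s ⟨F.n, by omega⟩ < G.s (Fin.last G.n) :=
        G.strict (by simp [Fin.lt_def]; omega)
      rw [G.top, ← h1] at h2
      exact lt_irrefl _ h2
    · have h : G.n < F.n := by omega
      have h1 := key G.n (by omega) (Nat.lt_succ_self _)
      have e1 : (⟨G.n, Nat.lt_succ_self _⟩ : Fin (G.n + 1)) = Fin.last G.n := rfl
      rw [e1, G.top] at h1
      have h2 : F.s ⟨G.n, by omega⟩ < F.s (Fin.last F.n) :=
        F.strict (by simp [Fin.lt_def]; omega)
      rw [F.top, h1] at h2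
      exact lt_irrefl _ h2
  exact ⟨hn, key⟩
end
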